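/- arXiv:math/0605007 — 3 statements merged into one kernel-verified Lean document; each statement's English description precedes it below -/
import Mathlib

section
/- Let (A_n)_{n≥1} be a sequence of events in a probability space such that P(A_n) → 0 as n → ∞. Suppose that for some fixed natural number m ≥ 0 the series ∑_{n=1}^∞ P(Ā_n ∩ Ā_{n+1} ∩ … ∩ Ā_{n+m-1} ∩ A_{n+m}) converges (where for m = 0 the summand is just P(A_n)). Then P(A_n infinitely often) = 0, i.e., the probability of the limsup of the events A_n is zero. -/
/-!
Fix `N`. A point lying in infinitely many `A k` lies in some `A k` with `k ≥ N`; take the least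
such `k`. Either `k < N + m`, so the point lies in one of `A N, …, A (N + m - 1)`, or
`A (k - m), …, A (k - 1)` all miss it and it lies in the event `Ā_{k-m} ∩ ⋯ ∩ Ā_{k-1} ∩ A_k`
with `k - m ≥ N`. Hence `P(A_n i.o.)` is at most `∑_{i<m} P(A_{N+i})` plus the tail from `N` of
the convergent series, and both tend to `0` as `N → ∞`.
-/

open MeasureTheory Filter Topology

section GapThenHit

variable {α : Type*} (A : ℕ → Set α) (m : ℕ)

def gapThenHit (n : ℕ) : Set α :=
  (⋂ i ∈ Finset.range m, (A (n + i))ᶜ) ∩ A (n + m)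

variable {A m}

theorem mem_gapThenHit_of_forall_not_mem {ω : α} {k : ℕ} (hmk : m ≤ k) (hk : ω ∈ A k)
    (hmiss : ∀ j, k - m ≤ j → j < k → ω ∉ A j) : ω ∈ gapThenHit A m (k - m) := by
  refine ⟨Set.mem_iInter₂.2 fun i hi => hmiss _ le_self_add ?_, by rwa [Nat.sub_add_cancel hmk]⟩
  have := Finset.mem_range.1 hi
  omega

variable (A m)

theorem limsup_subset_biUnion_union_iUnion_gapThenHit (N : ℕ) :
    limsup A atTop ⊆
      (⋃ i ∈ Finset.range m, A (N + i)) ∪ ⋃ n, gapThenHit A m (n + N) := by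
  classical
  intro ω hω
  have hex : ∃ k, N ≤ k ∧ ω ∈ A k := frequently_atTop.1 (mem_limsup_iff_frequently_mem.1 hω) N
  obtain ⟨hNk, hk⟩ := Nat.find_spec hex
  have hmin : ∀ j, N ≤ j → j < Nat.find hex → ω ∉ A j := fun j hNj hj hωj =>
    Nat.find_min hex hj ⟨hNj, hωj⟩
  rcases lt_or_ge (Nat.find hex) (N + m) with hlt | hge
  · refine Or.inl (Set.mem_biUnion (Finset.mem_range.2 (by omega : Nat.find hex - N < m)) ?_)
    rwa [Nat.add_sub_cancel' hNk]
  · refine Or.inr (Set.mem_iUnion.2 ⟨Nat.find hex - m - N, ?_⟩)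
    rw [Nat.sub_add_cancel (by omega : N ≤ Nat.find hex - m)]
    exact mem_gapThenHit_of_forall_not_mem (by omega) hk fun j hj hjk => hmin j (by omega) hjk

theorem measure_limsup_le_sum_add_tsum_gapThenHit [MeasurableSpace α] (μ : Measure α) (N : ℕ) :
    μ (limsup A atTop) ≤
      ∑ i ∈ Finset.range m, μ (A (N + i)) + ∑' n, μ (gapThenHit A m (n + N)) :=
  calc μ (limsup A atTop)
      ≤ μ ((⋃ i ∈ Finset.range m, A (N + i)) ∪ ⋃ n, gapThenHit A m (n + N)) :=
        measure_mono (limsup_subset_biUnion_union_iUnion_gapThenHit A m N)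
    _ ≤ μ (⋃ i ∈ Finset.range m, A (N + i)) + μ (⋃ n, gapThenHit A m (n + N)) :=
        measure_union_le _ _
    _ ≤ ∑ i ∈ Finset.range m, μ (A (N + i)) + ∑' n, μ (gapThenHit A m (n + N)) := by
        gcongr
        · exact measure_biUnion_finset_le _ _
        · exact measure_iUnion_le _

end GapThenHit

theorem tendsto_sum_range_add_of_tendsto_zero {M : Type*} [AddCommMonoid M] [TopologicalSpace M]
    [ContinuousAdd M] {f : ℕ → M} (hf : Tendsto f atTop (𝓝 0)) (m : ℕ) :
    Tendsto (fun N => ∑ i ∈ Finset.range m, f (N + i)) atTop (𝓝 0) := by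
  simpa using tendsto_finsetSum (Finset.range m) fun i _ => hf.comp (tendsto_add_atTop_nat i)

theorem borel_cantelli_generalized_general
    {Ω : Type*} [MeasurableSpace Ω] (μ : Measure Ω)
    (A : ℕ → Set Ω)
    (h0 : Tendsto (fun n => μ (A n)) atTop (nhds 0))
    (m : ℕ)
    (hsum : ∑' n, μ ((⋂ i ∈ Finset.range m, (A (n + i))ᶜ) ∩ A (n + m)) ≠ ⊤) :
    μ (Filter.limsup A Filter.atTop) = 0 := by
  have hbound := (tendsto_sum_range_add_of_tendsto_zero h0 m).add
    (ENNReal.tendsto_sum_nat_add (fun n => μ (gapThenHit A m n)) hsum)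
  rw [add_zero] at hbound
  exact nonpos_iff_eq_zero.1
    (ge_of_tendsto' hbound (measure_limsup_le_sum_add_tsum_gapThenHit A m μ))

/-- Generalized Borel–Cantelli (Lemma 3): if `P(A n) → 0` and for some `m ≥ 0`
the series `∑ₙ P(Ā_n ∩ ⋯ ∩ Ā_{n+m-1} ∩ A_{n+m})` converges, then `P(A_n i.o.) = 0`. -/
theorem borel_cantelli_generalized
    {Ω : Type*} [MeasurableSpace Ω] (μ : Measure Ω) [IsProbabilityMeasure μ]
    (A : ℕ → Set Ω) (hA : ∀ n, MeasurableSet (A n))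
    (h0 : Tendsto (fun n => μ (A n)) atTop (nhds 0))
    (m : ℕ)
    (hsum : ∑' n, μ ((⋂ i ∈ Finset.range m, (A (n + i))ᶜ) ∩ A (n + m)) ≠ ⊤) :
    μ (Filter.limsup A Filter.atTop) = 0 :=
  borel_cantelli_generalized_general μ A h0 m hsum
end

section
/- Let (A_n)_{n≥1} be a sequence of events in a probability space such that P(A_n) → 0 as n → ∞ and ∑_{n=1}^∞ P(Ā_n ∩ A_{n+1}) < ∞. Then P(A_n infinitely often) = 0. -/
/-!
Once the sequence has entered `A N`, it can only be in some later `A n` outside `A N` by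
passing through an "entrance" `(A k)ᶜ ∩ A (k + 1)` with `k ≥ N`. Hence
`P(A_n i.o.) ≤ P(A_N) + ∑_{k ≥ N} P(Ā_k ∩ A_{k+1})`, and both terms tend to `0` as `N → ∞`.
-/

open MeasureTheory Filter Set

theorem subset_union_iUnion_compl_inter_succ {α : Type*} (A : ℕ → Set α) {N n : ℕ}
    (hNn : N ≤ n) : A n ⊆ A N ∪ ⋃ k, (A (k + N))ᶜ ∩ A (k + N + 1) := by
  induction n, hNn using Nat.le_induction with
  | base => exact subset_union_left
  | succ n hNn ih =>
    intro ω hω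
    by_cases hωn : ω ∈ A n
    · exact ih hωn
    · refine Or.inr (mem_iUnion.mpr ⟨n - N, ?_⟩)
      rw [Nat.sub_add_cancel hNn]
      exact ⟨hωn, hω⟩

theorem limsup_subset_union_iUnion_compl_inter_succ {α : Type*} (A : ℕ → Set α) (N : ℕ) :
    limsup A atTop ⊆ A N ∪ ⋃ k, (A (k + N))ᶜ ∩ A (k + N + 1) := by
  intro ω hω
  obtain ⟨n, hωn, hNn⟩ :=
    ((mem_limsup_iff_frequently_mem.mp hω).and_eventually (eventually_ge_atTop N)).exists
  exact subset_union_iUnion_compl_inter_succ A hNn hωn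

theorem measure_limsup_le_add_tsum_compl_inter_succ {Ω : Type*} [MeasurableSpace Ω]
    (μ : Measure Ω) (A : ℕ → Set Ω) (N : ℕ) :
    μ (limsup A atTop) ≤ μ (A N) + ∑' k, μ ((A (k + N))ᶜ ∩ A (k + N + 1)) :=
  calc μ (limsup A atTop)
      ≤ μ (A N ∪ ⋃ k, (A (k + N))ᶜ ∩ A (k + N + 1)) :=
        measure_mono (limsup_subset_union_iUnion_compl_inter_succ A N)
    _ ≤ μ (A N) + μ (⋃ k, (A (k + N))ᶜ ∩ A (k + N + 1)) := measure_union_le _ _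
    _ ≤ μ (A N) + ∑' k, μ ((A (k + N))ᶜ ∩ A (k + N + 1)) := by
        gcongr
        exact measure_iUnion_le _

theorem barndorff_nielsen_general
    {Ω : Type*} [MeasurableSpace Ω] (μ : Measure Ω)
    (A : ℕ → Set Ω)
    (h0 : Tendsto (fun n => μ (A n)) atTop (nhds 0))
    (hsum : ∑' n, μ ((A n)ᶜ ∩ A (n + 1)) ≠ ⊤) :
    μ (Filter.limsup A Filter.atTop) = 0 := by
  have htail : Tendsto (fun N => μ (A N) + ∑' k, μ ((A (k + N))ᶜ ∩ A (k + N + 1)))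
      atTop (nhds 0) := by
    simpa using h0.add (ENNReal.tendsto_sum_nat_add (fun k => μ ((A k)ᶜ ∩ A (k + 1))) hsum)
  exact nonpos_iff_eq_zero.mp <|
    ge_of_tendsto htail (Eventually.of_forall (measure_limsup_le_add_tsum_compl_inter_succ μ A))

/-- Barndorff-Nielsen's lemma: if `P(A n) → 0` and `∑ₙ P(Ā_n ∩ A_{n+1}) < ∞`,
then `P(A_n i.o.) = 0`. -/
theorem barndorff_nielsen
    {Ω : Type*} [MeasurableSpace Ω] (μ : Measure Ω) [IsProbabilityMeasure μ]
    (A : ℕ → Set Ω) (hA : ∀ n, MeasurableSet (A n))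
    (h0 : Tendsto (fun n => μ (A n)) atTop (nhds 0))
    (hsum : ∑' n, μ ((A n)ᶜ ∩ A (n + 1)) ≠ ⊤) :
    μ (Filter.limsup A Filter.atTop) = 0 :=
  barndorff_nielsen_general μ A h0 hsum
end

section
/- Let (A_n)_{n≥1} be a sequence of events in a probability space such that P(A_n) → 0 as n → ∞ and ∑_{n=1}^∞ P(A_n ∩ Ā_{n+1}) < ∞. Then P(A_n infinitely often) = 0. -/
/-!
Off `limsup (Aₙ \ Aₙ₊₁)`, which is null by Borel–Cantelli, a point that lies in some late `Aₙ`
stays in every later one; so `limsup A` is contained, up to a null set, in `liminf A`. The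
measure of `liminf A` is at most `liminf μ(Aₙ) = 0` (Fatou's lemma for sets).
-/

open MeasureTheory Filter

theorem Filter.eventually_atTop_of_frequently_of_eventually_imp_succ {p : ℕ → Prop}
    (hfreq : ∃ᶠ n in atTop, p n) (hstep : ∀ᶠ n in atTop, p n → p (n + 1)) :
    ∀ᶠ n in atTop, p n := by
  obtain ⟨N, hN⟩ := eventually_atTop.1 hstep
  obtain ⟨M, hNM, hM⟩ := frequently_atTop.1 hfreq N
  refine eventually_atTop.2 ⟨M, fun n hn => ?_⟩
  induction n, hn using Nat.le_induction with
  | base => exact hM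
  | succ n hMn ih => exact hN n (hNM.trans hMn) ih

theorem Set.limsup_subset_limsup_diff_succ_union_liminf {α : Type*} (s : ℕ → Set α) :
    limsup s atTop ⊆ limsup (fun n => s n \ s (n + 1)) atTop ∪ liminf s atTop := by
  intro x hx
  by_cases hdiff : x ∈ limsup (fun n => s n \ s (n + 1)) atTop
  · exact Or.inl hdiff
  · right
    rw [mem_limsup_iff_frequently_mem, not_frequently] at hdiff
    rw [mem_limsup_iff_frequently_mem] at hx
    rw [mem_liminf_iff_eventually_mem]
    refine eventually_atTop_of_frequently_of_eventually_imp_succ hx ?_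
    filter_upwards [hdiff] with n hn hxn
    by_contra hxn'
    exact hn ⟨hxn, hxn'⟩

theorem MeasureTheory.measure_liminf_atTop_le_liminf {α : Type*} [MeasurableSpace α]
    (μ : Measure α) (s : ℕ → Set α) :
    μ (liminf s atTop) ≤ liminf (fun n => μ (s n)) atTop := by
  have hmono : Monotone fun n => ⋂ i ≥ n, s i :=
    fun m n hmn => Set.biInter_mono (fun i (hi : n ≤ i) => hmn.trans hi) fun _ _ => le_rfl
  rw [liminf_eq_iSup_iInf_of_nat, liminf_eq_iSup_iInf_of_nat]
  simp only [Set.iSup_eq_iUnion, Set.iInf_eq_iInter]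
  rw [hmono.measure_iUnion]
  gcongr with n
  exact le_iInf₂ fun i hi => measure_mono (Set.biInter_subset_of_mem hi)

theorem MeasureTheory.measure_liminf_atTop_eq_zero_of_tendsto {α : Type*} [MeasurableSpace α]
    {μ : Measure α} {s : ℕ → Set α} (h : Tendsto (fun n => μ (s n)) atTop (nhds 0)) :
    μ (liminf s atTop) = 0 :=
  le_zero_iff.1 <| (measure_liminf_atTop_le_liminf μ s).trans_eq h.liminf_eq

theorem barndorff_nielsen_variant_general
    {Ω : Type*} [MeasurableSpace Ω] (μ : Measure Ω)
    (A : ℕ → Set Ω)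
    (h0 : Tendsto (fun n => μ (A n)) atTop (nhds 0))
    (hsum : ∑' n, μ (A n ∩ (A (n + 1))ᶜ) ≠ ⊤) :
    μ (Filter.limsup A Filter.atTop) = 0 := by
  simp only [← Set.sdiff_eq] at hsum
  exact measure_mono_null (Set.limsup_subset_limsup_diff_succ_union_liminf A)
    (measure_union_null (measure_limsup_atTop_eq_zero hsum)
      (measure_liminf_atTop_eq_zero_of_tendsto h0))

/-- Variant of Barndorff-Nielsen's lemma: if `P(A n) → 0` and
`∑ₙ P(A_n ∩ Ā_{n+1}) < ∞`, then `P(A_n i.o.) = 0`. -/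
theorem barndorff_nielsen_variant
    {Ω : Type*} [MeasurableSpace Ω] (μ : Measure Ω) [IsProbabilityMeasure μ]
    (A : ℕ → Set Ω) (hA : ∀ n, MeasurableSet (A n))
    (h0 : Tendsto (fun n => μ (A n)) atTop (nhds 0))
    (hsum : ∑' n, μ (A n ∩ (A (n + 1))ᶜ) ≠ ⊤) :
    μ (Filter.limsup A Filter.atTop) = 0 :=
  barndorff_nielsen_variant_general μ A h0 hsum
end
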